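/- Let ε* = ln( (−5 + 2·(6353 − 405√241)^{1/3} + 2·(6353 + 405√241)^{1/3}) / 27 ). Then the quantity g(ε) = (e^{ε/2}+3)/(3(e^{ε/2}−1)²) − ((e^ε+1)/(e^ε−1))² satisfies: g(ε) > 0 for all 0 < ε < ε*, g(ε*) = 0, and g(ε) < 0 for all ε > ε*. -/

import Mathlib

/-!
Put `u = e^{ε/2}`. Clearing denominators gives `g(ε) = u (7 - u + u² - 3u³) / (3 (e^ε - 1)²)`,
so for `ε ≠ 0` the sign of `g(ε)` is that of the cubic `p(u) = 7 - u + u² - 3u³`, which is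
strictly decreasing in `u`. Cardano's formula makes `s = e^{ε*}` the real root of
`9s³ + 5s² - 13s - 49`, and this polynomial factors as `-p(t)(3t³ + t² + t + 7)` in `t = √s`;
hence `e^{ε*/2}` is the unique root of `p`, and the signs of `g` follow from monotonicity.
-/

open Real

/-- `ε* = ln((−5 + 2·(6353 − 405√241)^{1/3} + 2·(6353 + 405√241)^{1/3}) / 27)`. -/
noncomputable def epsStar : ℝ :=
  Real.log ((-5 + 2 * (6353 - 405 * Real.sqrt 241) ^ ((1 : ℝ) / 3) +
      2 * (6353 + 405 * Real.sqrt 241) ^ ((1 : ℝ) / 3)) / 27)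

/-- `g(ε) = (e^{ε/2}+3)/(3(e^{ε/2}−1)²) − ((e^ε+1)/(e^ε−1))²`. -/
noncomputable def gFun (ε : ℝ) : ℝ :=
  (exp (ε / 2) + 3) / (3 * (exp (ε / 2) - 1) ^ 2) - ((exp ε + 1) / (exp ε - 1)) ^ 2

noncomputable def gCubic (u : ℝ) : ℝ := 7 - u + u ^ 2 - 3 * u ^ 3

theorem gCubic_strictAnti : StrictAnti gCubic := by
  intro a b hab
  have hquad : 0 < 3 * (a ^ 2 + a * b + b ^ 2) - (a + b) + 1 := by
    nlinarith [sq_nonneg (a + b - 1 / 3), sq_nonneg a, sq_nonneg b]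
  have hdiff : gCubic a - gCubic b = (b - a) * (3 * (a ^ 2 + a * b + b ^ 2) - (a + b) + 1) := by
    unfold gCubic; ring
  linarith [mul_pos (sub_pos.2 hab) hquad]

theorem gFun_eq (ε : ℝ) :
    gFun ε = exp (ε / 2) / (3 * (exp ε - 1) ^ 2) * gCubic (exp (ε / 2)) := by
  have hexp : exp ε = exp (ε / 2) ^ 2 := by rw [← exp_nat_mul]; ring_nf
  rw [gFun, hexp, gCubic]
  have hu0 := exp_pos (ε / 2)
  generalize exp (ε / 2) = u at hu0 ⊢
  rcases eq_or_ne u 1 with rfl | hu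
  -- at `ε = 0` both sides are `0` through the convention `x / 0 = 0`
  · norm_num
  have hu1 : u - 1 ≠ 0 := sub_ne_zero.2 hu
  have hu2 : u ^ 2 - 1 ≠ 0 := by
    rw [show u ^ 2 - 1 = (u - 1) * (u + 1) by ring]; exact mul_ne_zero hu1 (by linarith)
  field_simp
  ring

theorem gFun_factor_pos {ε : ℝ} (hε : ε ≠ 0) : 0 < exp (ε / 2) / (3 * (exp ε - 1) ^ 2) := by
  have : exp ε - 1 ≠ 0 := sub_ne_zero.2 (exp_eq_one_iff ε |>.not.2 hε)
  positivity

theorem cardano_cubic {A B s : ℝ} (hsum : A ^ 3 + B ^ 3 = 12706) (hprod : A * B = 94)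
    (hs : 27 * s = 2 * A + 2 * B - 5) : 9 * s ^ 3 + 5 * s ^ 2 - 13 * s - 49 = 0 := by
  have : s = (2 * A + 2 * B - 5) / 27 := by linarith
  subst this
  linear_combination (8 / 2187 : ℝ) * hsum + ((24 * A + 24 * B) / 2187) * hprod

theorem rpow_one_div_three_pow_three {x : ℝ} (hx : 0 ≤ x) : (x ^ ((1 : ℝ) / 3)) ^ 3 = x := by
  rw [one_div]; exact_mod_cast rpow_inv_natCast_pow (n := 3) hx (by norm_num)

theorem exp_epsStar_spec :
    1 < exp epsStar ∧ 9 * exp epsStar ^ 3 + 5 * exp epsStar ^ 2 - 13 * exp epsStar - 49 = 0 := by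
  have hsq : √241 ^ 2 = 241 := sq_sqrt (by norm_num)
  have hsqrt : 0 ≤ √241 := sqrt_nonneg _
  have hm : 0 ≤ 6353 - 405 * √241 := by nlinarith
  have hp : 0 ≤ 6353 + 405 * √241 := by positivity
  set A := (6353 - 405 * √241) ^ ((1 : ℝ) / 3)
  set B := (6353 + 405 * √241) ^ ((1 : ℝ) / 3)
  have hA0 : 0 ≤ A := rpow_nonneg hm _
  have hB0 : 0 ≤ B := rpow_nonneg hp _
  have hA3 : A ^ 3 = 6353 - 405 * √241 := rpow_one_div_three_pow_three hm
  have hB3 : B ^ 3 = 6353 + 405 * √241 := rpow_one_div_three_pow_three hp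
  have hAB : A * B = 94 :=
    (pow_left_inj₀ (mul_nonneg hA0 hB0) (by norm_num) three_ne_zero).1 <| by
      rw [mul_pow, hA3, hB3]; nlinarith
  have hB : 16 < B := lt_of_pow_lt_pow_left₀ 3 hB0 (by rw [hB3]; nlinarith)
  have hs : 1 < (-5 + 2 * A + 2 * B) / 27 := by
    rw [lt_div_iff₀ (by norm_num)]; linarith
  rw [epsStar, exp_log (by linarith)]
  exact ⟨hs, cardano_cubic (by linarith) hAB (by ring)⟩

theorem gCubic_exp_half_epsStar : gCubic (exp (epsStar / 2)) = 0 := by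
  have ht : exp epsStar = exp (epsStar / 2) ^ 2 := by rw [← exp_nat_mul]; ring_nf
  have hcubic := exp_epsStar_spec.2
  rw [ht] at hcubic
  set t := exp (epsStar / 2)
  have hfactor : gCubic t * (3 * t ^ 3 + t ^ 2 + t + 7) = 0 := by
    unfold gCubic; linear_combination -hcubic
  exact (mul_eq_zero.1 hfactor).resolve_right (by positivity)

/-- Sign characterization of `g`: positive on `(0, ε*)`, zero at `ε*`, negative on `(ε*, ∞)`. -/
theorem stmt_9 :
    (∀ ε : ℝ, 0 < ε → ε < epsStar → 0 < gFun ε) ∧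
    gFun epsStar = 0 ∧
    (∀ ε : ℝ, epsStar < ε → gFun ε < 0) := by
  have hpos : 0 < epsStar := one_lt_exp_iff.1 exp_epsStar_spec.1
  have hroot := gCubic_exp_half_epsStar
  refine ⟨fun ε hε hlt => ?_, by rw [gFun_eq, hroot, mul_zero], fun ε hlt => ?_⟩
  · rw [gFun_eq]
    refine mul_pos (gFun_factor_pos hε.ne') ?_
    rw [← hroot]
    exact gCubic_strictAnti (exp_lt_exp.2 (by linarith))
  · rw [gFun_eq]
    refine mul_neg_of_pos_of_neg (gFun_factor_pos (by linarith)) ?_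
    rw [← hroot]
    exact gCubic_strictAnti (exp_lt_exp.2 (by linarith))
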